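/- arXiv:2404.04380 — 2 statements merged into one kernel-verified Lean document; each statement's English description precedes it below -/
import Mathlib

section
/- Let a, b, c be nonnegative integers and G = L(a,b,c). Then I(G) is Lyubeznik: there exists a total order on mingens(I(G)) with respect to which no Lyubeznik-critical subset has a bridge (so the associated Lyubeznik resolution is minimal). Moreover, when a ≥ 1 or c ≥ 1, the total order yy_b ≻ ⋯ ≻ yy_1 ≻ xx_a ≻ ⋯ ≻ xx_1 ≻ yz_c ≻ ⋯ ≻ yz_1 ≻ xz_c ≻ ⋯ ≻ xz_1 ≻ xy has this property. -/
/-!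
Under the order `ordL` the edge `xy` is the least generator. Every vertex of a bridge `m` of
`σ` lies on another member of `σ`. A leaf edge has a private vertex, so it is never a bridge.
If `m` is `xy`, or `xz_k` / `yz_k` (whose tip `z_k` lies only on `xz_k` and `yz_k`), this
produces two members of `σ` other than `xy`, one through `x` and one through `y`; then `xy`
divides their lcm and lies below both, so `σ` is not Lyubeznik-critical.
-/

open scoped Classical

noncomputable section

namespace ChauHaMaithani

variable {V : Type*}

/-- The lcm of a finite set of monomials (exponent vectors): pointwise maximum. -/
def mlcm (σ : Finset (V → ℕ)) : V → ℕ := fun v => σ.sup fun g => g v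

/-- `m` is a bridge of `σ`: `m ∈ σ` and dropping `m` does not change the lcm. -/
def IsBridge (σ : Finset (V → ℕ)) (m : V → ℕ) : Prop :=
  m ∈ σ ∧ mlcm (σ.erase m) = mlcm σ

/-- `m` is a gap of `σ`: `m ∉ σ` and adding `m` does not change the lcm. -/
def IsGap (σ : Finset (V → ℕ)) (m : V → ℕ) : Prop :=
  m ∉ σ ∧ mlcm (insert m σ) = mlcm σ

/-- A total order `≻` on monomials is encoded by a ranking function `ord`:
`m ≻ m'` iff `ord m' < ord m` (injectivity on the generating set is assumed separately).
`m` is a true gap of `σ` if it is a gap and every bridge of `σ ∪ {m}` dominated by `m`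
is already a bridge of `σ`. -/
def IsTrueGap (ord : (V → ℕ) → ℕ) (σ : Finset (V → ℕ)) (m : V → ℕ) : Prop :=
  IsGap σ m ∧ ∀ m', IsBridge (insert m σ) m' → ord m' < ord m → IsBridge σ m'

/-- `σ` is type-1: it has a true gap (in `M`) dominating none of its bridges. -/
def Type1 (M : Finset (V → ℕ)) (ord : (V → ℕ) → ℕ) (σ : Finset (V → ℕ)) : Prop :=
  ∃ m ∈ M, IsTrueGap ord σ m ∧ ∀ b, IsBridge σ b → ¬ ord b < ord m

/-- `σ` is potentially-type-2: it has a bridge dominating none of its true gaps. -/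
def PotType2 (M : Finset (V → ℕ)) (ord : (V → ℕ) → ℕ) (σ : Finset (V → ℕ)) : Prop :=
  ∃ b, IsBridge σ b ∧ ∀ m ∈ M, IsTrueGap ord σ m → ¬ ord m < ord b

/-- `b` is the `≻`-smallest bridge of `σ`. -/
def IsSBridge (ord : (V → ℕ) → ℕ) (σ : Finset (V → ℕ)) (b : V → ℕ) : Prop :=
  IsBridge σ b ∧ ∀ b', IsBridge σ b' → ord b ≤ ord b'

/-- `σ` is type-2. -/
def Type2 (M : Finset (V → ℕ)) (ord : (V → ℕ) → ℕ) (σ : Finset (V → ℕ)) : Prop :=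
  PotType2 M ord σ ∧
    ∀ σ' : Finset (V → ℕ), σ' ⊆ M → σ' ≠ σ → PotType2 M ord σ' →
      ∀ b b', IsSBridge ord σ b → IsSBridge ord σ' b' →
        σ'.erase b' = σ.erase b → ord b < ord b'

/-- `M` (the minimal generating set of a monomial ideal) is bridge-friendly w.r.t. `ord`:
every potentially-type-2 subset is type-2. -/
def BridgeFriendlyWrt (M : Finset (V → ℕ)) (ord : (V → ℕ) → ℕ) : Prop :=
  ∀ σ ⊆ M, PotType2 M ord σ → Type2 M ord σ

/-- `M` is bridge-friendly: bridge-friendly w.r.t. some total order on `M`. -/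
def BridgeFriendly (M : Finset (V → ℕ)) : Prop :=
  ∃ ord : (V → ℕ) → ℕ, Set.InjOn ord M ∧ BridgeFriendlyWrt M ord

/-- `σ = {m_1 ≻ ⋯ ≻ m_k} ⊆ M` is Lyubeznik-critical w.r.t. `ord`: there is no `m ∈ M` with
`m_t ≻ m` and `m ∣ lcm(m_1, …, m_t)` for some `1 < t ≤ k`. -/
def LyubCritical (M : Finset (V → ℕ)) (ord : (V → ℕ) → ℕ) (σ : Finset (V → ℕ)) : Prop :=
  σ ⊆ M ∧ ¬ ∃ m ∈ M, ∃ t ∈ σ, (∃ u ∈ σ, ord t < ord u) ∧ ord m < ord t ∧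
      ∀ v, m v ≤ mlcm (σ.filter fun g => ord t ≤ ord g) v

/-- `M` is Lyubeznik: for some total order on `M`, no Lyubeznik-critical subset has a
bridge (equivalently, the associated Lyubeznik resolution is minimal). -/
def IsLyubeznik (M : Finset (V → ℕ)) : Prop :=
  ∃ ord : (V → ℕ) → ℕ, Set.InjOn ord M ∧
    ∀ σ : Finset (V → ℕ), LyubCritical M ord σ → ∀ b, ¬ IsBridge σ b

/-- The quadratic monomial `xy` attached to an edge `e = {x,y}`. -/
def edgeMon (e : Sym2 V) : V → ℕ := fun v => if v ∈ e then 1 else 0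

/-- `mingens(I(G))`: the edge monomials of `G`. -/
def edgeGens [Fintype V] (G : SimpleGraph V) : Finset (V → ℕ) :=
  (Finset.univ.filter fun e : Sym2 V => e ∈ G.edgeSet).image edgeMon

/-- `mingens(I(G)^n)`: the monomials that are products of `n` edges of `G`. -/
def edgePowGens [Fintype V] (G : SimpleGraph V) (n : ℕ) : Finset (V → ℕ) :=
  (Finset.univ.filter fun f : Fin n → Sym2 V => ∀ i, f i ∈ G.edgeSet).image
    fun f => ∑ i, edgeMon (f i)

/-- A graph is chordal if it contains no induced cycle of length at least 4. -/
def Chordal (G : SimpleGraph V) : Prop :=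
  ∀ n, 4 ≤ n → IsEmpty (SimpleGraph.cycleGraph n ↪g G)


/-- Vertex type of the graph `L(a,b,c)`: `Sum.inl 0` is `x`, `Sum.inl 1` is `y`,
and the remaining summands are the leaves `x_i`, the leaves `y_j`, and the
triangle tips `z_k`. -/
abbrev LV (a b c : ℕ) := Fin 2 ⊕ (Fin a ⊕ Fin b ⊕ Fin c)

/-- The graph `L(a,b,c)`: `c` triangles glued along the common edge `{x,y}`, with
`a` leaves attached to `x` and `b` leaves attached to `y`. -/
def LGraph (a b c : ℕ) : SimpleGraph (LV a b c) :=
  SimpleGraph.fromRel fun u v =>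
    (u = Sum.inl 0 ∧ v = Sum.inl 1) ∨
    (∃ i, u = Sum.inl 0 ∧ v = Sum.inr (Sum.inl i)) ∨
    (∃ j, u = Sum.inl 1 ∧ v = Sum.inr (Sum.inr (Sum.inl j))) ∨
    (∃ k, (u = Sum.inl 0 ∨ u = Sum.inl 1) ∧ v = Sum.inr (Sum.inr (Sum.inr k)))

/-- The graph `BF(T,w)`: attach `w(e)` new triangles along each edge `e` of `T`. -/
def BFGraph {VT : Type} (T : SimpleGraph VT) (w : T.edgeSet → ℕ) :
    SimpleGraph (VT ⊕ (Σ e : T.edgeSet, Fin (w e))) :=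
  SimpleGraph.fromRel fun u v =>
    (∃ a b, u = Sum.inl a ∧ v = Sum.inl b ∧ T.Adj a b) ∨
    (∃ (a : VT) (e : T.edgeSet) (i : Fin (w e)), u = Sum.inl a ∧ v = Sum.inr ⟨e, i⟩ ∧
      a ∈ (e : Sym2 VT))

/-- The kite graph: the diamond (`K₄` minus the edge `{2,3}`) together with a pendant
vertex `4` attached to the degree-two vertex `2`. -/
def kite : SimpleGraph (Fin 5) :=
  SimpleGraph.fromEdgeSet {s(0,1), s(0,2), s(0,3), s(1,2), s(1,3), s(2,4)}

/-- The gem graph: the path `0-1-2-3` together with a vertex `4` adjacent to all of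
`0,1,2,3`. -/
def gem : SimpleGraph (Fin 5) :=
  SimpleGraph.fromEdgeSet {s(0,1), s(1,2), s(2,3), s(0,4), s(1,4), s(2,4), s(3,4)}

/-- The tadpole graph: the triangle `0,1,2` with a path `0-3-4` of length 2 attached. -/
def tadpole : SimpleGraph (Fin 5) :=
  SimpleGraph.fromEdgeSet {s(0,1), s(1,2), s(0,2), s(0,3), s(3,4)}

/-- The butterfly graph: two triangles `0,1,2` and `0,3,4` sharing the vertex `0`. -/
def butterfly : SimpleGraph (Fin 5) :=
  SimpleGraph.fromEdgeSet {s(0,1), s(1,2), s(0,2), s(0,3), s(3,4), s(0,4)}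

/-- The net graph: the triangle `0,1,2` with pendant vertices `3,4,5` attached to
`0,1,2` respectively. -/
def net : SimpleGraph (Fin 6) :=
  SimpleGraph.fromEdgeSet {s(0,1), s(1,2), s(0,2), s(0,3), s(1,4), s(2,5)}

/-- Vertex weights encoding the total order on the edges of `L(a,b,c)`. -/
def Lwt (a b c : ℕ) : LV a b c → ℕ := fun v =>
  match v with
  | Sum.inl i => if i = 0 then 0 else a + b + c + 1
  | Sum.inr (Sum.inl i) => 2 * (a + b + c + 1) + c + 1 + i.1
  | Sum.inr (Sum.inr (Sum.inl j)) => (a + b + c + 1) + c + a + 1 + j.1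
  | Sum.inr (Sum.inr (Sum.inr k)) => (a + b + c + 1) + 1 + k.1

/-- Ranking function realizing the total order
`yy_b ≻ ⋯ ≻ yy_1 ≻ xx_a ≻ ⋯ ≻ xx_1 ≻ yz_c ≻ ⋯ ≻ yz_1 ≻ xz_c ≻ ⋯ ≻ xz_1 ≻ xy`
on the edge monomials of `L(a,b,c)` (bigger rank = bigger in the order). -/
def ordL (a b c : ℕ) : (LV a b c → ℕ) → ℕ := fun g => ∑ v, Lwt a b c v * g v

section Lyubeznik

variable {M σ : Finset (V → ℕ)} {ord : (V → ℕ) → ℕ}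

lemma le_mlcm {g : V → ℕ} (hg : g ∈ σ) (v : V) : g v ≤ mlcm σ v :=
  Finset.le_sup (f := fun g => g v) hg

lemma IsBridge.exists_ne_pos {m : V → ℕ} (hb : IsBridge σ m) {v : V} (hv : 0 < m v) :
    ∃ g ∈ σ, g ≠ m ∧ 0 < g v := by
  have hle : m v ≤ mlcm (σ.erase m) v := hb.2 ▸ le_mlcm hb.1 v
  obtain ⟨g, hg, hgv⟩ := Finset.lt_sup_iff.mp (hv.trans_le hle)
  exact ⟨g, Finset.mem_of_mem_erase hg, Finset.ne_of_mem_erase hg, hgv⟩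

lemma not_lyubCritical_of_le_max {m g₁ g₂ : V → ℕ} (hm : m ∈ M) (h₁ : g₁ ∈ σ) (h₂ : g₂ ∈ σ)
    (hne : ord g₁ ≠ ord g₂) (hm₁ : ord m < ord g₁) (hm₂ : ord m < ord g₂)
    (hdvd : ∀ v, m v ≤ max (g₁ v) (g₂ v)) : ¬ LyubCritical M ord σ := by
  wlog hlt : ord g₁ < ord g₂ generalizing g₁ g₂
  · exact this h₂ h₁ hne.symm hm₂ hm₁ (fun v => max_comm (g₁ v) (g₂ v) ▸ hdvd v)
      (hne.symm.lt_of_le (not_lt.mp hlt))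
  rintro ⟨-, hcrit⟩
  refine hcrit ⟨m, hm, g₁, h₁, ⟨g₂, h₂, hlt⟩, hm₁, fun v => (hdvd v).trans (max_le ?_ ?_)⟩
  exacts [le_mlcm (by simpa using h₁) v, le_mlcm (by simpa [hlt.le] using h₂) v]

end Lyubeznik

lemma edgeMon_apply (u v w : V) : edgeMon s(u, v) w = if w = u ∨ w = v then 1 else 0 := by
  simp [edgeMon]

lemma sum_mul_edgeMon [Fintype V] (wt : V → ℕ) {u v : V} (h : u ≠ v) :
    ∑ t, wt t * edgeMon s(u, v) t = wt u + wt v := by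
  rw [Fintype.sum_eq_add u v h fun t ht => by simp [edgeMon_apply, ht]]
  simp [edgeMon_apply, h, h.symm]

lemma mem_edgeGens [Fintype V] {G : SimpleGraph V} {m : V → ℕ} :
    m ∈ edgeGens G ↔ ∃ e ∈ G.edgeSet, edgeMon e = m := by
  simp [edgeGens]

namespace LGraph

variable {a b c : ℕ}

def Exy (a b c : ℕ) : LV a b c → ℕ := edgeMon s(Sum.inl 0, Sum.inl 1)

def Exx (i : Fin a) : LV a b c → ℕ := edgeMon s(Sum.inl 0, Sum.inr (Sum.inl i))

def Eyy (j : Fin b) : LV a b c → ℕ := edgeMon s(Sum.inl 1, Sum.inr (Sum.inr (Sum.inl j)))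

def Exz (k : Fin c) : LV a b c → ℕ := edgeMon s(Sum.inl 0, Sum.inr (Sum.inr (Sum.inr k)))

def Eyz (k : Fin c) : LV a b c → ℕ := edgeMon s(Sum.inl 1, Sum.inr (Sum.inr (Sum.inr k)))

lemma Exy_mem : Exy a b c ∈ edgeGens (LGraph a b c) :=
  mem_edgeGens.mpr ⟨_, by simp [LGraph], rfl⟩

lemma mem_edgeGens_cases {m : LV a b c → ℕ} (hm : m ∈ edgeGens (LGraph a b c)) :
    m = Exy a b c ∨ (∃ i, m = Exx i) ∨ (∃ j, m = Eyy j) ∨ (∃ k, m = Exz k) ∨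
      ∃ k, m = Eyz k := by
  obtain ⟨e, he, rfl⟩ := mem_edgeGens.mp hm
  induction e using Sym2.ind with | _ u v => ?_
  rw [SimpleGraph.mem_edgeSet, LGraph, SimpleGraph.fromRel_adj] at he
  obtain ⟨-, hr | hr⟩ := he
  on_goal 2 => rw [Sym2.eq_swap]
  all_goals
    rcases hr with ⟨rfl, rfl⟩ | ⟨i, rfl, rfl⟩ | ⟨j, rfl, rfl⟩ | ⟨k, rfl | rfl, rfl⟩
    exacts [Or.inl rfl, Or.inr (Or.inl ⟨i, rfl⟩), Or.inr (Or.inr (Or.inl ⟨j, rfl⟩)),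
      Or.inr (Or.inr (Or.inr (Or.inl ⟨k, rfl⟩))), Or.inr (Or.inr (Or.inr (Or.inr ⟨k, rfl⟩)))]

lemma ordL_Exy : ordL a b c (Exy a b c) = a + b + c + 1 := by
  simp [ordL, Exy, sum_mul_edgeMon, Lwt]

lemma ordL_Exx (i : Fin a) : ordL a b c (Exx i) = 2 * (a + b + c + 1) + c + 1 + i := by
  simp [ordL, Exx, sum_mul_edgeMon, Lwt]

lemma ordL_Eyy (j : Fin b) : ordL a b c (Eyy j) = 2 * (a + b + c + 1) + c + a + 1 + j := by
  simp [ordL, Eyy, sum_mul_edgeMon, Lwt]; ring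

lemma ordL_Exz (k : Fin c) : ordL a b c (Exz k) = (a + b + c + 1) + 1 + k := by
  simp [ordL, Exz, sum_mul_edgeMon, Lwt]

lemma ordL_Eyz (k : Fin c) : ordL a b c (Eyz k) = 2 * (a + b + c + 1) + 1 + k := by
  simp [ordL, Eyz, sum_mul_edgeMon, Lwt]; ring

lemma ordL_injOn : Set.InjOn (ordL a b c) (edgeGens (LGraph a b c)) := by
  intro m hm m' hm' h
  rcases mem_edgeGens_cases hm with rfl | ⟨i, rfl⟩ | ⟨i, rfl⟩ | ⟨i, rfl⟩ | ⟨i, rfl⟩ <;>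
  rcases mem_edgeGens_cases hm' with rfl | ⟨j, rfl⟩ | ⟨j, rfl⟩ | ⟨j, rfl⟩ | ⟨j, rfl⟩ <;>
  simp only [ordL_Exy, ordL_Exx, ordL_Eyy, ordL_Exz, ordL_Eyz] at h <;>
  first
  | rfl
  | (obtain rfl : i = j := Fin.ext (by omega); rfl)
  | omega

lemma ordL_Exy_lt {g : LV a b c → ℕ} (hg : g ∈ edgeGens (LGraph a b c)) (hne : g ≠ Exy a b c) :
    ordL a b c (Exy a b c) < ordL a b c g := by
  rcases mem_edgeGens_cases hg with rfl | ⟨i, rfl⟩ | ⟨i, rfl⟩ | ⟨i, rfl⟩ | ⟨i, rfl⟩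
  · exact absurd rfl hne
  all_goals simp only [ordL_Exy, ordL_Exx, ordL_Eyy, ordL_Exz, ordL_Eyz]; omega

lemma eq_Exy_of_pos {g : LV a b c → ℕ} (hg : g ∈ edgeGens (LGraph a b c))
    (hx : 0 < g (Sum.inl 0)) (hy : 0 < g (Sum.inl 1)) : g = Exy a b c := by
  rcases mem_edgeGens_cases hg with rfl | ⟨i, rfl⟩ | ⟨i, rfl⟩ | ⟨i, rfl⟩ | ⟨i, rfl⟩ <;>
  simp_all [Exy, Exx, Eyy, Exz, Eyz, edgeMon_apply]

lemma eq_Exx_of_pos {g : LV a b c → ℕ} (hg : g ∈ edgeGens (LGraph a b c)) {i : Fin a}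
    (hi : 0 < g (Sum.inr (Sum.inl i))) : g = Exx i := by
  rcases mem_edgeGens_cases hg with rfl | ⟨i, rfl⟩ | ⟨i, rfl⟩ | ⟨i, rfl⟩ | ⟨i, rfl⟩ <;>
  simp_all [Exy, Exx, Eyy, Exz, Eyz, edgeMon_apply, pos_iff_ne_zero]

lemma eq_Eyy_of_pos {g : LV a b c → ℕ} (hg : g ∈ edgeGens (LGraph a b c)) {j : Fin b}
    (hj : 0 < g (Sum.inr (Sum.inr (Sum.inl j)))) : g = Eyy j := by
  rcases mem_edgeGens_cases hg with rfl | ⟨i, rfl⟩ | ⟨i, rfl⟩ | ⟨i, rfl⟩ | ⟨i, rfl⟩ <;>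
  simp_all [Exy, Exx, Eyy, Exz, Eyz, edgeMon_apply, pos_iff_ne_zero]

lemma eq_Exz_or_eq_Eyz_of_pos {g : LV a b c → ℕ} (hg : g ∈ edgeGens (LGraph a b c)) {k : Fin c}
    (hk : 0 < g (Sum.inr (Sum.inr (Sum.inr k)))) : g = Exz k ∨ g = Eyz k := by
  rcases mem_edgeGens_cases hg with rfl | ⟨i, rfl⟩ | ⟨i, rfl⟩ | ⟨i, rfl⟩ | ⟨i, rfl⟩ <;>
  simp_all [Exy, Exx, Eyy, Exz, Eyz, edgeMon_apply, pos_iff_ne_zero]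

lemma Exz_ne_Exy (k : Fin c) : Exz k ≠ Exy a b c := fun h => by
  simpa [Exz, Exy, edgeMon_apply] using congrFun h (Sum.inr (Sum.inr (Sum.inr k)))

lemma Eyz_ne_Exy (k : Fin c) : Eyz k ≠ Exy a b c := fun h => by
  simpa [Eyz, Exy, edgeMon_apply] using congrFun h (Sum.inr (Sum.inr (Sum.inr k)))

/-- `xy` is the least generator in the order `ordL`, and it divides the lcm of any generator
through `x` with any generator through `y`. -/
lemma not_lyubCritical_of_pos_x_y {σ : Finset (LV a b c → ℕ)}
    (hσ : σ ⊆ edgeGens (LGraph a b c)) {g₁ g₂ : LV a b c → ℕ} (h₁ : g₁ ∈ σ) (h₂ : g₂ ∈ σ)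
    (hx : 0 < g₁ (Sum.inl 0)) (hy : 0 < g₂ (Sum.inl 1))
    (hne₁ : g₁ ≠ Exy a b c) (hne₂ : g₂ ≠ Exy a b c) :
    ¬ LyubCritical (edgeGens (LGraph a b c)) (ordL a b c) σ := by
  have hne : g₁ ≠ g₂ := fun h => hne₁ (eq_Exy_of_pos (hσ h₁) hx (h ▸ hy))
  refine not_lyubCritical_of_le_max Exy_mem h₁ h₂ (ordL_injOn.ne (hσ h₁) (hσ h₂) hne)
    (ordL_Exy_lt (hσ h₁) hne₁) (ordL_Exy_lt (hσ h₂) hne₂) fun v => ?_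
  rw [Exy, edgeMon_apply]
  split_ifs with hv
  · rcases hv with rfl | rfl <;> omega
  · exact Nat.zero_le _

theorem not_isBridge_of_lyubCritical {σ : Finset (LV a b c → ℕ)}
    (hσ : LyubCritical (edgeGens (LGraph a b c)) (ordL a b c) σ) (m : LV a b c → ℕ) :
    ¬ IsBridge σ m := by
  intro hb
  rcases mem_edgeGens_cases (hσ.1 hb.1) with rfl | ⟨i, rfl⟩ | ⟨j, rfl⟩ | ⟨k, rfl⟩ | ⟨k, rfl⟩
  · obtain ⟨g₁, h₁, hne₁, hx⟩ := hb.exists_ne_pos (v := Sum.inl 0) (by simp [Exy, edgeMon_apply])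
    obtain ⟨g₂, h₂, hne₂, hy⟩ := hb.exists_ne_pos (v := Sum.inl 1) (by simp [Exy, edgeMon_apply])
    exact not_lyubCritical_of_pos_x_y hσ.1 h₁ h₂ hx hy hne₁ hne₂ hσ
  · obtain ⟨g, hg, hne, hi⟩ := hb.exists_ne_pos (v := Sum.inr (Sum.inl i))
      (by simp [Exx, edgeMon_apply])
    exact hne (eq_Exx_of_pos (hσ.1 hg) hi)
  · obtain ⟨g, hg, hne, hj⟩ := hb.exists_ne_pos (v := Sum.inr (Sum.inr (Sum.inl j)))
      (by simp [Eyy, edgeMon_apply])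
    exact hne (eq_Eyy_of_pos (hσ.1 hg) hj)
  · obtain ⟨g, hg, hne, hk⟩ := hb.exists_ne_pos (v := Sum.inr (Sum.inr (Sum.inr k)))
      (by simp [Exz, edgeMon_apply])
    rcases eq_Exz_or_eq_Eyz_of_pos (hσ.1 hg) hk with rfl | rfl
    · exact hne rfl
    · exact not_lyubCritical_of_pos_x_y hσ.1 hb.1 hg (by simp [Exz, edgeMon_apply])
        (by simp [Eyz, edgeMon_apply]) (Exz_ne_Exy k) (Eyz_ne_Exy k) hσ
  · obtain ⟨g, hg, hne, hk⟩ := hb.exists_ne_pos (v := Sum.inr (Sum.inr (Sum.inr k)))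
      (by simp [Eyz, edgeMon_apply])
    rcases eq_Exz_or_eq_Eyz_of_pos (hσ.1 hg) hk with rfl | rfl
    · exact not_lyubCritical_of_pos_x_y hσ.1 hg hb.1 (by simp [Exz, edgeMon_apply])
        (by simp [Eyz, edgeMon_apply]) (Exz_ne_Exy k) (Eyz_ne_Exy k) hσ
    · exact hne rfl

end LGraph

/-- **Proposition 3.6.** The edge ideal of `L(a,b,c)` is Lyubeznik; moreover, when
`a ≥ 1` or `c ≥ 1`, the explicit total order
`yy_b ≻ ⋯ ≻ yy_1 ≻ xx_a ≻ ⋯ ≻ xx_1 ≻ yz_c ≻ ⋯ ≻ yz_1 ≻ xz_c ≻ ⋯ ≻ xz_1 ≻ xy`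
(encoded by `ordL`) yields a minimal Lyubeznik resolution, i.e. no Lyubeznik-critical
subset has a bridge. -/
theorem LGraph_isLyubeznik (a b c : ℕ) :
    IsLyubeznik (edgeGens (LGraph a b c)) ∧
    (1 ≤ a ∨ 1 ≤ c →
      Set.InjOn (ordL a b c) (edgeGens (LGraph a b c)) ∧
      ∀ σ : Finset (LV a b c → ℕ),
        LyubCritical (edgeGens (LGraph a b c)) (ordL a b c) σ → ∀ m, ¬ IsBridge σ m) :=
  ⟨⟨ordL a b c, LGraph.ordL_injOn, fun _ => LGraph.not_isBridge_of_lyubCritical⟩,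
    fun _ => ⟨LGraph.ordL_injOn, fun _ => LGraph.not_isBridge_of_lyubCritical⟩⟩

end ChauHaMaithani
end
end

section
/- Let G be a finite connected chordal simple graph. Then G is isomorphic to BF(T,w) for some finite tree T and edge-weight function w : E(T) → ℕ if and only if G contains none of the following as an induced subgraph: the complete graph K_4, the gem, the kite, and the net. -/
open scoped Classical

noncomputable section

/-!
In `BF(T, w)` with `T` a tree, a triangle cannot lie inside `T`, so it contains an added vertex,
whose only neighbours are the other two vertices of the triangle. This property passes to induced
subgraphs, while each of `K₄`, gem, kite and net has a triangle all of whose vertices have a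
neighbour outside it; so none of them is an induced subgraph of `BF(T, w)`.

Conversely, a case analysis (producing an induced `C₄`, `K₄`, gem, kite or net otherwise) shows
that in a chordal graph `G` without `K₄`, gem, kite and net every triangle has a vertex of degree
two. Deleting one such vertex from each triangle leaves a connected chordal triangle-free graph,
i.e. a tree `T`, and every deleted vertex hangs on an edge of `T`; counting them edge by edge gives
the weights `w` with `G ≅ BF(T, w)`.
-/

namespace SimpleGraph

variable {V W : Type*} {H : SimpleGraph W}

theorem cycleGraph_adj_iff_val {n : ℕ} {u v : Fin n} :
    (cycleGraph n).Adj u v ↔ u ≠ v ∧ (u.val + 1 = v.val ∨ v.val + 1 = u.val ∨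
      (u.val = 0 ∧ v.val + 1 = n) ∨ (v.val = 0 ∧ u.val + 1 = n)) := by
  rw [cycleGraph_adj']
  rcases lt_trichotomy u v with h | rfl | h
  · rw [Fin.coe_sub_iff_le.mpr h.le, Fin.coe_sub_iff_lt.mpr h, ne_eq, Fin.ext_iff]
    omega
  · simp [Fin.coe_sub_iff_le.mpr le_rfl]
  · rw [Fin.coe_sub_iff_lt.mpr h, Fin.coe_sub_iff_le.mpr h.le, ne_eq, Fin.ext_iff]
    omega

theorem Copy.cycleGraph_isContained_of_adj {n : ℕ} (f : Copy (cycleGraph n) H) {i j : Fin n}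
    (hij : i.val + 2 ≤ j.val) (hadj : H.Adj (f i) (f j)) :
    cycleGraph (j.val - i.val + 1) ⊑ H := by
  let g : Fin (j.val - i.val + 1) → W := fun k => f ⟨i.val + k.val, by omega⟩
  have hfirst : ∀ k, k.val = 0 → g k = f i := fun k hk => congrArg f (Fin.ext (by simp [hk]))
  have hlast : ∀ k, k.val = j.val - i.val → g k = f j :=
    fun k hk => congrArg f (Fin.ext (by simp [hk]; omega))
  have hstep : ∀ k l : Fin (j.val - i.val + 1), k.val + 1 = l.val → H.Adj (g k) (g l) :=
    fun k l hkl => f.toHom.map_adj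
      (cycleGraph_adj_iff_val.mpr ⟨by simp [Fin.ext_iff]; omega, by simp; omega⟩)
  refine ⟨⟨⟨g, fun {k l} hkl => ?_⟩, fun k l hkl => ?_⟩⟩
  · rcases (cycleGraph_adj_iff_val.mp hkl).2 with h | h | ⟨hk, hl⟩ | ⟨hl, hk⟩
    · exact hstep k l h
    · exact (hstep l k h).symm
    · rw [hfirst k hk, hlast l (by omega)]; exact hadj
    · rw [hfirst l hl, hlast k (by omega)]; exact hadj.symm
  · exact Fin.ext (by simpa using Fin.ext_iff.mp (f.injective hkl))

theorem IsAcyclic.cliqueFree_three {G : SimpleGraph V} (hG : G.IsAcyclic) : G.CliqueFree 3 := by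
  intro s hs
  have hfree := isAcyclic_iff_free_cycleGraph.mp hG 3 le_rfl
  rw [cycleGraph_three_eq_top] at hfree
  exact hfree ((not_cliqueFree_iff_top_isContained 3).mp fun h => h s hs)

end SimpleGraph

namespace ChauHaMaithani

open SimpleGraph

theorem Chordal.comap {V W : Type*} {G : SimpleGraph V} {H : SimpleGraph W} (hG : Chordal G)
    (f : H ↪g G) : Chordal H :=
  fun n hn => ⟨fun c => (hG n hn).false (f.comp c)⟩

-- A shortest cycle has no chord, so it is a triangle or an induced cycle of length at least 4.
theorem Chordal.isAcyclic {W : Type*} {H : SimpleGraph W} (hH : Chordal H)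
    (h3 : H.CliqueFree 3) : H.IsAcyclic := by
  rw [isAcyclic_iff_free_cycleGraph]
  by_contra! hcyc
  obtain ⟨hn, ⟨f⟩⟩ := Nat.find_spec hcyc
  set n := Nat.find hcyc
  have hchordless : ∀ i j, H.Adj (f i) (f j) → (cycleGraph n).Adj i j := by
    suffices ∀ i j : Fin n, i < j → H.Adj (f i) (f j) → (cycleGraph n).Adj i j by
      intro i j hij
      rcases lt_trichotomy i j with h | rfl | h
      · exact this i j h hij
      · exact absurd hij H.irrefl
      · exact (this j i h hij.symm).symm
    intro i j hlt hadj
    by_contra hnadj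
    have hnadj := not_and.mp (mt cycleGraph_adj_iff_val.mpr hnadj) hlt.ne
    rw [Fin.lt_def] at hlt
    have hgap : i.val + 2 ≤ j.val := by omega
    have := Nat.find_min' hcyc ⟨by omega, f.cycleGraph_isContained_of_adj hgap hadj⟩
    omega
  have e : cycleGraph n ↪g H :=
    ⟨⟨f, f.injective⟩, fun {a b} => ⟨hchordless a b, f.toHom.map_adj⟩⟩
  rcases hn.eq_or_lt with h | h
  · rw [← h, cycleGraph_three_eq_top] at e
    exact (not_cliqueFree_iff_top_isContained 3).mpr e.isContained h3
  · exact (hH n h).false e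

def TrianglesHaveDegreeTwoVertex {W : Type*} (G : SimpleGraph W) : Prop :=
  ∀ ⦃a b c⦄, G.Adj a b → G.Adj b c → G.Adj a c →
    G.neighborSet a ⊆ {b, c} ∨ G.neighborSet b ⊆ {a, c} ∨ G.neighborSet c ⊆ {a, b}

section TrianglesHaveDegreeTwoVertex

variable {U W : Type*} {F : SimpleGraph U} {G : SimpleGraph W}

theorem TrianglesHaveDegreeTwoVertex.comap (hG : TrianglesHaveDegreeTwoVertex G) (f : F ↪g G) :
    TrianglesHaveDegreeTwoVertex F := by
  have pullback : ∀ {a b c}, G.neighborSet (f a) ⊆ {f b, f c} → F.neighborSet a ⊆ {b, c} :=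
    fun h x hx => by simpa [f.injective.eq_iff] using h (f.map_adj_iff.mpr hx)
  intro a b c hab hbc hac
  rcases hG (f.map_adj_iff.mpr hab) (f.map_adj_iff.mpr hbc) (f.map_adj_iff.mpr hac)
    with h | h | h
  exacts [.inl (pullback h), .inr (.inl (pullback h)), .inr (.inr (pullback h))]

theorem TrianglesHaveDegreeTwoVertex.isEmpty_embedding (hG : TrianglesHaveDegreeTwoVertex G)
    (hF : ¬ TrianglesHaveDegreeTwoVertex F) : IsEmpty (F ↪g G) :=
  ⟨fun f => hF (hG.comap f)⟩

theorem not_trianglesHaveDegreeTwoVertex {a b c a' b' c' : U}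
    (hab : F.Adj a b) (hbc : F.Adj b c) (hac : F.Adj a c)
    (ha : F.Adj a a') (hb : F.Adj b b') (hc : F.Adj c c')
    (ha' : a' ∉ ({b, c} : Set U)) (hb' : b' ∉ ({a, c} : Set U))
    (hc' : c' ∉ ({a, b} : Set U)) :
    ¬ TrianglesHaveDegreeTwoVertex F := by
  intro hF
  rcases hF hab hbc hac with h | h | h
  exacts [ha' (h ha), hb' (h hb), hc' (h hc)]

end TrianglesHaveDegreeTwoVertex

theorem not_trianglesHaveDegreeTwoVertex_top :
    ¬ TrianglesHaveDegreeTwoVertex (⊤ : SimpleGraph (Fin 4)) := by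
  apply not_trianglesHaveDegreeTwoVertex (a := 0) (b := 1) (c := 2) (a' := 3) (b' := 3) (c' := 3)
    <;> simp

theorem not_trianglesHaveDegreeTwoVertex_gem : ¬ TrianglesHaveDegreeTwoVertex gem := by
  apply not_trianglesHaveDegreeTwoVertex (a := 1) (b := 2) (c := 4) (a' := 0) (b' := 3) (c' := 0)
    <;> simp [gem]

theorem not_trianglesHaveDegreeTwoVertex_kite : ¬ TrianglesHaveDegreeTwoVertex kite := by
  apply not_trianglesHaveDegreeTwoVertex (a := 0) (b := 1) (c := 2) (a' := 3) (b' := 3) (c' := 4)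
    <;> simp [kite]

theorem not_trianglesHaveDegreeTwoVertex_net : ¬ TrianglesHaveDegreeTwoVertex net := by
  apply not_trianglesHaveDegreeTwoVertex (a := 0) (b := 1) (c := 2) (a' := 3) (b' := 4) (c' := 5)
    <;> simp [net]

namespace BFGraph

variable {VT : Type} {T : SimpleGraph VT} {w : T.edgeSet → ℕ}

theorem adj_inl_inl {a b : VT} : (BFGraph T w).Adj (.inl a) (.inl b) ↔ T.Adj a b := by
  simp only [BFGraph, fromRel_adj, ne_eq, Sum.inl.injEq]
  simpa [T.adj_comm b a] using fun h => h.ne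

theorem adj_inl_inr {a : VT} {e : T.edgeSet} {i : Fin (w e)} :
    (BFGraph T w).Adj (.inl a) (.inr ⟨e, i⟩) ↔ a ∈ (e : Sym2 VT) := by
  simp only [BFGraph, fromRel_adj]
  aesop

theorem not_adj_inr_inr {x y : Σ e : T.edgeSet, Fin (w e)} :
    ¬ (BFGraph T w).Adj (.inr x) (.inr y) := by
  simp [BFGraph]

theorem neighborSet_inr_subset {x : Σ e : T.edgeSet, Fin (w e)}
    {u v : VT ⊕ (Σ e : T.edgeSet, Fin (w e))} (hu : (BFGraph T w).Adj (.inr x) u)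
    (hv : (BFGraph T w).Adj (.inr x) v) (huv : u ≠ v) :
    (BFGraph T w).neighborSet (.inr x) ⊆ {u, v} := by
  obtain ⟨e, i⟩ := x
  have inl_mem : ∀ s, (BFGraph T w).Adj (.inr ⟨e, i⟩) s →
      ∃ a ∈ (e : Sym2 VT), s = .inl a := by
    rintro (a | y) h
    · exact ⟨a, adj_inl_inr.mp h.symm, rfl⟩
    · exact absurd h not_adj_inr_inr
  obtain ⟨a, ha, rfl⟩ := inl_mem u hu
  obtain ⟨b, hb, rfl⟩ := inl_mem v hv
  have he : (e : Sym2 VT) = s(a, b) := (Sym2.mem_and_mem_iff (by simpa using huv)).mp ⟨ha, hb⟩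
  intro s hs
  obtain ⟨c, hc, rfl⟩ := inl_mem s hs
  rw [he, Sym2.mem_iff] at hc
  rcases hc with rfl | rfl <;> simp

theorem trianglesHaveDegreeTwoVertex (hT : T.CliqueFree 3) :
    TrianglesHaveDegreeTwoVertex (BFGraph T w) := by
  rintro (a | x) (b | y) (c | z) hab hbc hac
  · exact absurd (is3Clique_triple_iff.mpr
      ⟨adj_inl_inl.mp hab, adj_inl_inl.mp hac, adj_inl_inl.mp hbc⟩) (hT _)
  · exact .inr (.inr (neighborSet_inr_subset hac.symm hbc.symm hab.ne))
  · exact .inr (.inl (neighborSet_inr_subset hab.symm hbc hac.ne))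
  · exact absurd hbc not_adj_inr_inr
  · exact .inl (neighborSet_inr_subset hab hac hbc.ne)
  · exact absurd hac not_adj_inr_inr
  · exact absurd hab not_adj_inr_inr
  · exact absurd hab not_adj_inr_inr

end BFGraph

section InducedSubgraphs

variable {W : Type*} {G : SimpleGraph W}

theorem nonempty_embedding_of_forall_lt {n : ℕ} {F : SimpleGraph (Fin n)} (f : Fin n → W)
    (hf : ∀ i j, i < j → f i ≠ f j ∧ (G.Adj (f i) (f j) ↔ F.Adj i j)) :
    Nonempty (F ↪g G) := by
  have hne : ∀ i j, i ≠ j → f i ≠ f j ∧ (G.Adj (f i) (f j) ↔ F.Adj i j) := by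
    intro i j hij
    rcases hij.lt_or_gt with h | h
    · exact hf i j h
    · exact ⟨(hf j i h).1.symm, by rw [G.adj_comm, F.adj_comm]; exact (hf j i h).2⟩
  refine ⟨⟨⟨f, fun i j h => ?_⟩, fun {i j} => ?_⟩⟩
  · by_contra hij
    exact (hne i j hij).1 h
  · by_cases hij : i = j
    · subst hij; simp
    · exact (hne i j hij).2

theorem nonempty_top_embedding {g0 g1 g2 g3 : W}
    (h01 : G.Adj g0 g1) (h02 : G.Adj g0 g2) (h03 : G.Adj g0 g3) (h12 : G.Adj g1 g2)
    (h13 : G.Adj g1 g3) (h23 : G.Adj g2 g3) : Nonempty ((⊤ : SimpleGraph (Fin 4)) ↪g G) := by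
  refine nonempty_embedding_of_forall_lt ![g0, g1, g2, g3] fun i j hij => ?_
  fin_cases i <;> fin_cases j <;> simp_all <;> exact Adj.ne ‹_›

theorem nonempty_cycleGraph_four_embedding {g0 g1 g2 g3 : W}
    (h01 : G.Adj g0 g1) (h12 : G.Adj g1 g2) (h23 : G.Adj g2 g3) (h03 : G.Adj g0 g3)
    (n02 : ¬ G.Adj g0 g2) (n13 : ¬ G.Adj g1 g3) (d02 : g0 ≠ g2) (d13 : g1 ≠ g3) :
    Nonempty (cycleGraph 4 ↪g G) := by
  refine nonempty_embedding_of_forall_lt ![g0, g1, g2, g3] fun i j hij => ?_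
  fin_cases i <;> fin_cases j <;> simp_all [cycleGraph_adj_iff_val] <;> exact Adj.ne ‹_›

theorem nonempty_gem_embedding {g0 g1 g2 g3 g4 : W}
    (h01 : G.Adj g0 g1) (h12 : G.Adj g1 g2) (h23 : G.Adj g2 g3) (h04 : G.Adj g0 g4)
    (h14 : G.Adj g1 g4) (h24 : G.Adj g2 g4) (h34 : G.Adj g3 g4) (n02 : ¬ G.Adj g0 g2)
    (n03 : ¬ G.Adj g0 g3) (n13 : ¬ G.Adj g1 g3) (d02 : g0 ≠ g2) (d03 : g0 ≠ g3)
    (d13 : g1 ≠ g3) : Nonempty (gem ↪g G) := by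
  refine nonempty_embedding_of_forall_lt ![g0, g1, g2, g3, g4] fun i j hij => ?_
  fin_cases i <;> fin_cases j <;> simp_all [gem] <;> exact Adj.ne ‹_›

theorem nonempty_kite_embedding {g0 g1 g2 g3 g4 : W}
    (h01 : G.Adj g0 g1) (h02 : G.Adj g0 g2) (h03 : G.Adj g0 g3) (h12 : G.Adj g1 g2)
    (h13 : G.Adj g1 g3) (h24 : G.Adj g2 g4) (n04 : ¬ G.Adj g0 g4) (n14 : ¬ G.Adj g1 g4)
    (n23 : ¬ G.Adj g2 g3) (n34 : ¬ G.Adj g3 g4) (d04 : g0 ≠ g4) (d14 : g1 ≠ g4)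
    (d23 : g2 ≠ g3) (d34 : g3 ≠ g4) : Nonempty (kite ↪g G) := by
  refine nonempty_embedding_of_forall_lt ![g0, g1, g2, g3, g4] fun i j hij => ?_
  fin_cases i <;> fin_cases j <;> simp_all [kite] <;> exact Adj.ne ‹_›

theorem nonempty_net_embedding {g0 g1 g2 g3 g4 g5 : W}
    (h01 : G.Adj g0 g1) (h12 : G.Adj g1 g2) (h02 : G.Adj g0 g2) (h03 : G.Adj g0 g3)
    (h14 : G.Adj g1 g4) (h25 : G.Adj g2 g5) (n04 : ¬ G.Adj g0 g4) (n05 : ¬ G.Adj g0 g5)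
    (n13 : ¬ G.Adj g1 g3) (n15 : ¬ G.Adj g1 g5) (n23 : ¬ G.Adj g2 g3) (n24 : ¬ G.Adj g2 g4)
    (n34 : ¬ G.Adj g3 g4) (n35 : ¬ G.Adj g3 g5) (n45 : ¬ G.Adj g4 g5) (d04 : g0 ≠ g4)
    (d05 : g0 ≠ g5) (d13 : g1 ≠ g3) (d15 : g1 ≠ g5) (d23 : g2 ≠ g3) (d24 : g2 ≠ g4)
    (d34 : g3 ≠ g4) (d35 : g3 ≠ g5) (d45 : g4 ≠ g5) : Nonempty (net ↪g G) := by
  refine nonempty_embedding_of_forall_lt ![g0, g1, g2, g3, g4, g5] fun i j hij => ?_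
  fin_cases i <;> fin_cases j <;> simp_all [net] <;> exact Adj.ne ‹_›

theorem neighborSet_subset_of_common_neighbor
    (hK4 : IsEmpty ((⊤ : SimpleGraph (Fin 4)) ↪g G)) (hgem : IsEmpty (gem ↪g G))
    (hkite : IsEmpty (kite ↪g G)) (hC4 : IsEmpty (cycleGraph 4 ↪g G)) ⦃a b c d : W⦄
    (hab : G.Adj a b) (hbc : G.Adj b c) (hac : G.Adj a c)
    (hda : G.Adj d a) (hdb : G.Adj d b) (hdc : d ≠ c) : G.neighborSet c ⊆ {a, b} := by
  have ncd : ¬ G.Adj c d := fun h =>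
    (nonempty_top_embedding hab hac hda.symm hbc hdb.symm h).elim hK4.false
  intro e hce
  rw [mem_neighborSet] at hce
  by_contra he
  simp only [Set.mem_insert_iff, Set.mem_singleton_iff, not_or] at he
  obtain ⟨hea, heb⟩ := he
  have hed : e ≠ d := fun h => ncd (h ▸ hce)
  by_cases hae : G.Adj a e <;> by_cases hbe : G.Adj b e <;> by_cases hde : G.Adj d e
  · exact (nonempty_top_embedding hab hac hae hbc hbe hce).elim hK4.false
  · exact (nonempty_top_embedding hab hac hae hbc hbe hce).elim hK4.false
  · exact (nonempty_cycleGraph_four_embedding hce hde.symm hdb hbc.symm ncd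
      (fun h => hbe h.symm) hdc.symm heb).elim hC4.false
  · exact (nonempty_gem_embedding hce.symm hbc.symm hdb.symm hae.symm hac.symm hab.symm hda
      (fun h => hbe h.symm) (fun h => hde h.symm) ncd heb hed hdc.symm).elim hgem.false
  · exact (nonempty_cycleGraph_four_embedding hce hde.symm hda hac.symm ncd
      (fun h => hae h.symm) hdc.symm hea).elim hC4.false
  · exact (nonempty_gem_embedding hce.symm hac.symm hda.symm hbe.symm hbc.symm hab hdb
      (fun h => hae h.symm) (fun h => hde h.symm) ncd hea hed hdc.symm).elim hgem.false
  · exact (nonempty_cycleGraph_four_embedding hde.symm hda hac hce.symm (fun h => hae h.symm)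
      (fun h => ncd h.symm) hea hdc).elim hC4.false
  · exact (nonempty_kite_embedding hab hac hda.symm hbc hdb.symm hce hae hbe ncd hde
      (Ne.symm hea) (Ne.symm heb) hdc.symm hed.symm).elim hkite.false

theorem false_of_triangle_with_private_neighbors (hnet : IsEmpty (net ↪g G))
    (hC4 : IsEmpty (cycleGraph 4 ↪g G)) {a b c a' b' c' : W}
    (hab : G.Adj a b) (hbc : G.Adj b c) (hac : G.Adj a c)
    (ha : G.Adj a a') (hb : G.Adj b b') (hc : G.Adj c c')
    (nba : ¬ G.Adj b a') (nca : ¬ G.Adj c a') (nab : ¬ G.Adj a b') (ncb : ¬ G.Adj c b')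
    (nac : ¬ G.Adj a c') (nbc : ¬ G.Adj b c') (da'b : a' ≠ b) (da'c : a' ≠ c)
    (db'a : b' ≠ a) (db'c : b' ≠ c) (dc'a : c' ≠ a) (dc'b : c' ≠ b) : False := by
  have da'b' : a' ≠ b' := fun h => nab (h ▸ ha)
  have da'c' : a' ≠ c' := fun h => nac (h ▸ ha)
  have db'c' : b' ≠ c' := fun h => nbc (h ▸ hb)
  by_cases ha'b' : G.Adj a' b'
  · exact (nonempty_cycleGraph_four_embedding ha ha'b' hb.symm hab nab (fun h => nba h.symm)
      db'a.symm da'b).elim hC4.false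
  by_cases ha'c' : G.Adj a' c'
  · exact (nonempty_cycleGraph_four_embedding ha ha'c' hc.symm hac nac (fun h => nca h.symm)
      dc'a.symm da'c).elim hC4.false
  by_cases hb'c' : G.Adj b' c'
  · exact (nonempty_cycleGraph_four_embedding hb hb'c' hc.symm hbc nbc (fun h => ncb h.symm)
      dc'b.symm db'c).elim hC4.false
  exact (nonempty_net_embedding hab hbc hac ha hb hc nab nac nba nbc nca ncb ha'b' ha'c' hb'c'
    db'a.symm dc'a.symm da'b.symm dc'b.symm da'c.symm db'c.symm da'b' da'c' db'c').elim
    hnet.false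

theorem trianglesHaveDegreeTwoVertex_of_isEmpty
    (hK4 : IsEmpty ((⊤ : SimpleGraph (Fin 4)) ↪g G)) (hgem : IsEmpty (gem ↪g G))
    (hkite : IsEmpty (kite ↪g G)) (hnet : IsEmpty (net ↪g G))
    (hC4 : IsEmpty (cycleGraph 4 ↪g G)) : TrianglesHaveDegreeTwoVertex G := by
  intro a b c hab hbc hac
  by_contra! h
  simp only [Set.not_subset, mem_neighborSet, Set.mem_insert_iff, Set.mem_singleton_iff,
    not_or] at h
  obtain ⟨⟨a', ha, da'b, da'c⟩, ⟨b', hb, db'a, db'c⟩, ⟨c', hc, dc'a, dc'b⟩⟩ := h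
  have common := neighborSet_subset_of_common_neighbor hK4 hgem hkite hC4
  have outside : ∀ {x y z v}, G.Adj x v → v ≠ y → v ≠ z →
      ¬ G.neighborSet x ⊆ {y, z} :=
    fun hxv hvy hvz hsub => by simpa [hvy, hvz] using hsub hxv
  refine false_of_triangle_with_private_neighbors hnet hC4 hab hbc hac ha hb hc
    ?_ ?_ ?_ ?_ ?_ ?_ da'b da'c db'a db'c dc'a dc'b
  · exact fun h => outside hc dc'a dc'b (common hab hbc hac ha.symm h.symm da'c)
  · exact fun h => outside hb db'a db'c (common hac hbc.symm hab ha.symm h.symm da'b)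
  · exact fun h => outside hc dc'a dc'b (common hab hbc hac h.symm hb.symm db'c)
  · exact fun h => outside ha da'b da'c (common hbc hac.symm hab.symm hb.symm h.symm db'a)
  · exact fun h => outside hb db'a db'c (common hac hbc.symm hab h.symm hc.symm dc'b)
  · exact fun h => outside ha da'b da'c (common hbc hac.symm hab.symm h.symm hc.symm dc'a)

end InducedSubgraphs

section Decomposition

variable {W : Type} {G : SimpleGraph W}

def IsTriangleTip (G : SimpleGraph W) (v : W) : Prop :=
  ∃ y z, G.Adj y z ∧ G.neighborSet v = {y, z}

theorem IsTriangleTip.neighborSet_eq_of_adj {v x y : W} (hv : IsTriangleTip G v)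
    (hx : G.Adj v x) (hy : G.Adj v y) (hxy : x ≠ y) : G.neighborSet v = {x, y} := by
  obtain ⟨p, q, -, hN⟩ := hv
  have hx' : x ∈ ({p, q} : Set W) := hN ▸ hx
  have hy' : y ∈ ({p, q} : Set W) := hN ▸ hy
  simp only [Set.mem_insert_iff, Set.mem_singleton_iff] at hx' hy'
  rcases hx' with rfl | rfl <;> rcases hy' with rfl | rfl
  exacts [absurd rfl hxy, hN, hN.trans (Set.pair_comm _ _), absurd rfl hxy]

theorem IsTriangleTip.adj_of_adj {v x y : W} (hv : IsTriangleTip G v) (hx : G.Adj v x)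
    (hy : G.Adj v y) (hxy : x ≠ y) : G.Adj x y := by
  obtain ⟨p, q, hpq, hN⟩ := id hv
  rcases Set.pair_eq_pair_iff.mp ((hv.neighborSet_eq_of_adj hx hy hxy).symm.trans hN) with
    ⟨rfl, rfl⟩ | ⟨rfl, rfl⟩
  exacts [hpq, hpq.symm]

theorem isTriangleTip_of_neighborSet_subset {a b c : W} (hab : G.Adj a b) (hbc : G.Adj b c)
    (hac : G.Adj a c) (h : G.neighborSet a ⊆ {b, c}) : IsTriangleTip G a :=
  ⟨b, c, hbc, h.antisymm (Set.insert_subset hab (Set.singleton_subset_iff.mpr hac))⟩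

variable [LinearOrder W]

/-- A triangle may have several vertices of degree two (as in `K₃`), of which only one is an added
vertex of `BF(T, w)`: the order picks it. -/
def IsMinimalTip (G : SimpleGraph W) (v : W) : Prop :=
  IsTriangleTip G v ∧ ∀ u, G.Adj v u → IsTriangleTip G u → v < u

theorem IsMinimalTip.not_isMinimalTip_of_adj {u v : W} (hv : IsMinimalTip G v)
    (hvu : G.Adj v u) : ¬ IsMinimalTip G u :=
  fun hu => lt_asymm (hv.2 u hvu hu.1) (hu.2 v hvu.symm hv.1)

theorem exists_isMinimalTip_of_triangle (hG : TrianglesHaveDegreeTwoVertex G) {a b c : W}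
    (hab : G.Adj a b) (hbc : G.Adj b c) (hac : G.Adj a c) :
    IsMinimalTip G a ∨ IsMinimalTip G b ∨ IsMinimalTip G c := by
  set S := ({a, b, c} : Finset W).filter (IsTriangleTip G)
  have hS : S.Nonempty := by
    rcases hG hab hbc hac with h | h | h
    · exact ⟨a, by simp [S, isTriangleTip_of_neighborSet_subset hab hbc hac h]⟩
    · exact ⟨b, by simp [S, isTriangleTip_of_neighborSet_subset hab.symm hac hbc h]⟩
    · exact ⟨c, by simp [S, isTriangleTip_of_neighborSet_subset hac.symm hab hbc.symm h]⟩
  obtain ⟨hxabc, hx⟩ := Finset.mem_filter.mp (S.min'_mem hS)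
  set x := S.min' hS
  simp only [Finset.mem_insert, Finset.mem_singleton] at hxabc
  have hN : G.neighborSet x ⊆ {a, b, c} := by
    rcases hxabc with h | h | h <;> rw [h] at hx ⊢
    · simp [hx.neighborSet_eq_of_adj hab hac hbc.ne]
    · simp [hx.neighborSet_eq_of_adj hab.symm hbc hac.ne, Set.insert_subset_iff]
    · simp [hx.neighborSet_eq_of_adj hac.symm hbc.symm hab.ne, Set.insert_subset_iff]
  have hmin : IsMinimalTip G x := ⟨hx, fun u hxu hu => (S.min'_le u (by
    simpa [S, hu] using hN hxu)).lt_of_ne hxu.ne⟩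
  rcases hxabc with h | h | h <;> rw [h] at hmin <;> simp [hmin]

abbrev deleteMinimalTips (G : SimpleGraph W) : SimpleGraph {v | ¬ IsMinimalTip G v} :=
  G.induce {v | ¬ IsMinimalTip G v}

theorem deleteMinimalTips_cliqueFree_three (hG : TrianglesHaveDegreeTwoVertex G) :
    (deleteMinimalTips G).CliqueFree 3 := by
  intro s hs
  obtain ⟨a, b, c, hab, hac, hbc, rfl⟩ := is3Clique_iff.mp hs
  rcases exists_isMinimalTip_of_triangle hG hab hbc hac with h | h | h
  exacts [a.2 h, b.2 h, c.2 h]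

theorem IsMinimalTip.exists_edge {v : W} (hv : IsMinimalTip G v) :
    ∃ e : (deleteMinimalTips G).edgeSet,
      ∀ a : {v | ¬ IsMinimalTip G v}, a ∈ (e : Sym2 _) ↔ G.Adj v a := by
  obtain ⟨y, z, hyz, hN⟩ := hv.1
  have hvy : G.Adj v y := (hN.symm ▸ Set.mem_insert y {z} : y ∈ G.neighborSet v)
  have hvz : G.Adj v z := (hN.symm ▸ Set.mem_insert_of_mem y rfl : z ∈ G.neighborSet v)
  refine ⟨⟨s(⟨y, hv.not_isMinimalTip_of_adj hvy⟩, ⟨z, hv.not_isMinimalTip_of_adj hvz⟩),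
    hyz⟩, fun a => ?_⟩
  rw [← mem_neighborSet, hN]
  simp [Subtype.ext_iff]

theorem deleteMinimalTips_connected (hconn : G.Connected) : (deleteMinimalTips G).Connected := by
  have hproj : ∀ v : W, ∃ u : {v | ¬ IsMinimalTip G v},
      v = u ∨ (IsMinimalTip G v ∧ G.Adj v u) := by
    intro v
    by_cases hv : IsMinimalTip G v
    · obtain ⟨e, he⟩ := hv.exists_edge
      exact ⟨_, .inr ⟨hv, (he e.1.out.1).mp (Sym2.out_fst_mem e.1)⟩⟩
    · exact ⟨⟨v, hv⟩, .inl rfl⟩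
  choose proj hproj using hproj
  have step : ∀ u v, G.Adj u v → (deleteMinimalTips G).Reachable (proj u) (proj v) := by
    intro u v huv
    suffices proj u = proj v ∨ G.Adj (proj u) (proj v) by
      rcases this with h | h
      exacts [h ▸ .rfl, Adj.reachable h]
    by_cases heq : (proj u : W) = proj v
    · exact .inl (Subtype.ext heq)
    refine .inr ?_
    rcases hproj u with hu | ⟨hu, hup⟩ <;> rcases hproj v with hv | ⟨hv, hvq⟩
    · exact hu ▸ hv ▸ huv
    · exact hv.1.adj_of_adj (hu ▸ huv.symm) hvq heq
    · exact (hu.1.adj_of_adj (hv ▸ huv) hup (Ne.symm heq)).symm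
    · exact absurd hv (hu.not_isMinimalTip_of_adj huv)
  have walk : ∀ {u v} (p : G.Walk u v), (deleteMinimalTips G).Reachable (proj u) (proj v) := by
    intro u v p
    induction p with
    | nil => rfl
    | cons h _ ih => exact (step _ _ h).trans ih
  have proj_val : ∀ x : {v | ¬ IsMinimalTip G v}, proj x = x := fun x =>
    (Subtype.ext ((hproj x).resolve_right fun h => x.2 h.1)).symm
  refine (connected_iff _).mpr ⟨fun x y => ?_, ⟨proj hconn.nonempty.some⟩⟩
  obtain ⟨p⟩ := hconn.preconnected x y
  simpa only [proj_val] using walk p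

def tipEdge (t : {v // IsMinimalTip G v}) : (deleteMinimalTips G).edgeSet :=
  (IsMinimalTip.exists_edge t.2).choose

theorem mem_tipEdge {t : {v // IsMinimalTip G v}} {a : {v | ¬ IsMinimalTip G v}} :
    a ∈ (tipEdge t : Sym2 _) ↔ G.Adj t a :=
  (IsMinimalTip.exists_edge t.2).choose_spec a

variable [Fintype W]

def tipCount (G : SimpleGraph W) (e : (deleteMinimalTips G).edgeSet) : ℕ :=
  Fintype.card {t // tipEdge t = e}

def bfEquiv (G : SimpleGraph W) :
    {v | ¬ IsMinimalTip G v} ⊕ (Σ e : (deleteMinimalTips G).edgeSet, Fin (tipCount G e)) ≃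
      W :=
  (Equiv.sumCongr (Equiv.refl _) ((Equiv.sigmaCongrRight fun _ => (Fintype.equivFin _).symm).trans
    (Equiv.sigmaFiberEquiv tipEdge))).trans ((Equiv.sumComm _ _).trans (Equiv.sumCompl _))

theorem bfEquiv_inl (a : {v | ¬ IsMinimalTip G v}) : bfEquiv G (.inl a) = a := rfl

theorem exists_bfEquiv_inr (e : (deleteMinimalTips G).edgeSet) (i : Fin (tipCount G e)) :
    ∃ t, tipEdge t = e ∧ bfEquiv G (.inr ⟨e, i⟩) = t :=
  ⟨_, ((Fintype.equivFin _).symm i).2, rfl⟩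

def bfIso (G : SimpleGraph W) : BFGraph (deleteMinimalTips G) (tipCount G) ≃g G where
  toEquiv := bfEquiv G
  map_rel_iff' := by
    rintro (a | ⟨e, i⟩) (b | ⟨f, j⟩)
    · rw [BFGraph.adj_inl_inl]; rfl
    · obtain ⟨t, rfl, ht⟩ := exists_bfEquiv_inr f j
      simp only [bfEquiv_inl, ht, BFGraph.adj_inl_inr, mem_tipEdge, G.adj_comm]
    · obtain ⟨t, rfl, ht⟩ := exists_bfEquiv_inr e i
      simp only [bfEquiv_inl, ht, (BFGraph _ _).adj_comm (.inr _),
        BFGraph.adj_inl_inr, mem_tipEdge]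
    · obtain ⟨s, rfl, hs⟩ := exists_bfEquiv_inr e i
      obtain ⟨t, rfl, ht⟩ := exists_bfEquiv_inr f j
      simp only [hs, ht]
      exact iff_of_false (fun h => s.2.not_isMinimalTip_of_adj h t.2) BFGraph.not_adj_inr_inr

end Decomposition

theorem exists_isTree_iso_BFGraph {W : Type} [LinearOrder W] [Fintype W] {G : SimpleGraph W}
    (hG : TrianglesHaveDegreeTwoVertex G) (hchordal : Chordal G) (hconn : G.Connected) :
    ∃ (VT : Type) (_ : Fintype VT) (T : SimpleGraph VT) (_ : T.IsTree)
      (w : T.edgeSet → ℕ), Nonempty (G ≃g BFGraph T w) :=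
  ⟨_, inferInstance, deleteMinimalTips G,
    ⟨deleteMinimalTips_connected hconn, (hchordal.comap (Embedding.induce _)).isAcyclic
      (deleteMinimalTips_cliqueFree_three hG)⟩, tipCount G, ⟨(bfIso G).symm⟩⟩

/-- **Proposition 4.8.** A finite connected chordal simple graph is isomorphic to
`BF(T,w)` iff it contains none of `K₄`, gem, kite, net as an induced subgraph. -/
theorem isoBF_iff_forbidden {V : Type} [Fintype V] (G : SimpleGraph V)
    (hconn : G.Connected) (hchordal : Chordal G) :
    (∃ (VT : Type) (_ : Fintype VT) (T : SimpleGraph VT) (_ : T.IsTree)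
        (w : T.edgeSet → ℕ), Nonempty (G ≃g BFGraph T w)) ↔
      (IsEmpty ((⊤ : SimpleGraph (Fin 4)) ↪g G) ∧
       IsEmpty (gem ↪g G) ∧
       IsEmpty (kite ↪g G) ∧
       IsEmpty (net ↪g G)) := by
  constructor
  · rintro ⟨VT, _, T, hT, w, ⟨φ⟩⟩
    have hG := (BFGraph.trianglesHaveDegreeTwoVertex hT.isAcyclic.cliqueFree_three).comap
      φ.toEmbedding
    exact ⟨hG.isEmpty_embedding not_trianglesHaveDegreeTwoVertex_top,
      hG.isEmpty_embedding not_trianglesHaveDegreeTwoVertex_gem,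
      hG.isEmpty_embedding not_trianglesHaveDegreeTwoVertex_kite,
      hG.isEmpty_embedding not_trianglesHaveDegreeTwoVertex_net⟩
  · rintro ⟨hK4, hgem, hkite, hnet⟩
    let : LinearOrder V := LinearOrder.lift' _ (Fintype.equivFin V).injective
    exact exists_isTree_iso_BFGraph
      (trianglesHaveDegreeTwoVertex_of_isEmpty hK4 hgem hkite hnet (hchordal 4 le_rfl))
      hchordal hconn

end ChauHaMaithani
end
end
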